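/- arXiv:math/0310436 — 4 statements merged into one kernel-verified Lean document; each statement's English description precedes it below -/
import Mathlib

section
/- Every positive integer solution (k, ℓ, m, d) with k ≤ ℓ ≤ m, 1/k + 1/ℓ + 1/m < 1, m ≤ d, and d(1 − 1/k − 1/ℓ − 1/m) ≤ 1 − 3/m satisfies (k, ℓ) ∈ {(2,3), (2,4)} and m ≤ 10. -/
/-! Since `d ≥ m` and the slack `ε = 1 - 1/k - 1/ℓ - 1/m` is positive, the hypothesis gives
`m ε ≤ 1 - 3/m`, i.e. `m² (1 - 1/k - 1/ℓ) ≤ 2m - 3`. The left side grows quadratically in `m`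
as soon as `1 - 1/k - 1/ℓ` is bounded below, which happens unless `(k, ℓ) ∈ {(2,3), (2,4)}`;
with the worst remaining bound `1 - 1/2 - 1/3 = 1/6` one gets `m ≤ 10`. -/

theorem sq_mul_excess_le {k ℓ m d : ℕ} (hm : 0 < m) (hmd : m ≤ d)
    (hsum : (1 : ℚ) / k + 1 / ℓ + 1 / m < 1)
    (hineq : (d : ℚ) * (1 - 1 / k - 1 / ℓ - 1 / m) ≤ 1 - 3 / m) :
    (m : ℚ) ^ 2 * (1 - 1 / k - 1 / ℓ) ≤ 2 * m - 3 := by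
  have hm0 : (0 : ℚ) < m := by exact_mod_cast hm
  have hε : (0 : ℚ) < 1 - 1 / k - 1 / ℓ - 1 / m := by linarith
  have hmε : (m : ℚ) * (1 - 1 / k - 1 / ℓ - 1 / m) ≤ 1 - 3 / m :=
    (mul_le_mul_of_nonneg_right (by exact_mod_cast hmd) hε.le).trans hineq
  calc (m : ℚ) ^ 2 * (1 - 1 / k - 1 / ℓ)
      = m * (m * (1 - 1 / k - 1 / ℓ - 1 / m)) + m := by field_simp; ring
    _ ≤ m * (1 - 3 / m) + m := by gcongr
    _ = 2 * m - 3 := by field_simp; ring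

/-- `c y² - 2y` is nondecreasing for `y ≥ 1/c`. -/
theorem two_mul_sub_three_lt_of_le {α : Type*} [Field α] [LinearOrder α] [IsStrictOrderedRing α]
    {c x y : α} (hc : 0 ≤ c) (hcx : 1 ≤ c * x) (hx : 2 * x - 3 < c * x ^ 2) (hxy : x ≤ y) :
    2 * y - 3 < c * y ^ 2 := by
  have hcy : c * x ≤ c * y := mul_le_mul_of_nonneg_left hxy hc
  nlinarith [mul_nonneg (sub_nonneg.2 hxy) (show 0 ≤ c * (y + x) - 2 by linarith)]

theorem lt_of_sq_mul_excess_le {k ℓ m n : ℕ} {c : ℚ}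
    (key : (m : ℚ) ^ 2 * (1 - 1 / k - 1 / ℓ) ≤ 2 * m - 3) (hc : c ≤ 1 - 1 / k - 1 / ℓ)
    (hc0 : 0 ≤ c) (hcn : 1 ≤ c * n) (hn : 2 * (n : ℚ) - 3 < c * n ^ 2) : m < n := by
  by_contra! hnm
  have := two_mul_sub_three_lt_of_le hc0 hcn hn (Nat.cast_le (α := ℚ).2 hnm)
  nlinarith [mul_le_mul_of_nonneg_left hc (sq_nonneg (m : ℚ))]

theorem lt_of_one_div_lt_one_div_cast {a n : ℕ} (ha : 0 < a) (hn : 0 < n)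
    (h : (1 : ℚ) / n < 1 / a) : a < n := by
  exact_mod_cast (one_div_lt_one_div (by positivity) (by positivity)).1 h

theorem one_div_cast_le_one_div {a n : ℕ} (ha : 0 < a) (h : a ≤ n) : (1 : ℚ) / n ≤ 1 / a :=
  one_div_le_one_div_of_le (by positivity) (by exact_mod_cast h)

/-- Every positive integer solution (k,ℓ,m,d) with k ≤ ℓ ≤ m ≤ d,
    1/k + 1/ℓ + 1/m < 1 and d(1 - 1/k - 1/ℓ - 1/m) ≤ 1 - 3/m satisfies
    (k,ℓ) ∈ {(2,3),(2,4)} and m ≤ 10. -/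
theorem stmt_8 (k ℓ m d : ℕ) (hk : 0 < k) (hkl : k ≤ ℓ) (hlm : ℓ ≤ m) (hmd : m ≤ d)
    (hsum : (1 : ℚ) / k + 1 / ℓ + 1 / m < 1)
    (hineq : (d : ℚ) * (1 - 1 / k - 1 / ℓ - 1 / m) ≤ 1 - 3 / m) :
    ((k = 2 ∧ ℓ = 3) ∨ (k = 2 ∧ ℓ = 4)) ∧ m ≤ 10 := by
  have key := sq_mul_excess_le (by omega) hmd hsum hineq
  have hℓ_pos : (0 : ℚ) ≤ 1 / ℓ := by positivity
  have hm_pos : (0 : ℚ) ≤ 1 / m := by positivity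
  have hk2 : 1 < k := lt_of_one_div_lt_one_div_cast one_pos hk (by push_cast; linarith)
  obtain rfl : k = 2 := by
    by_contra hk3
    have h3k := one_div_cast_le_one_div (a := 3) (by norm_num) (show 3 ≤ k by omega)
    have h3ℓ := one_div_cast_le_one_div (a := 3) (by norm_num) (show 3 ≤ ℓ by omega)
    have hm4 : m < 4 := lt_of_sq_mul_excess_le key (c := 1 / 3)
      (by push_cast at h3k h3ℓ; linarith) (by norm_num) (by norm_num) (by norm_num)
    obtain ⟨rfl, rfl, rfl⟩ : k = 3 ∧ ℓ = 3 ∧ m = 3 := by omega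
    norm_num at hsum
  have hℓ3 : 2 < ℓ := lt_of_one_div_lt_one_div_cast two_pos (by omega) (by push_cast; linarith)
  have h3ℓ := one_div_cast_le_one_div (by norm_num) hℓ3
  have hℓ4 : ℓ ≤ 4 := by
    by_contra! hℓ5
    have h5ℓ := one_div_cast_le_one_div (a := 5) (by norm_num) hℓ5
    have hm5 : m < 5 := lt_of_sq_mul_excess_le key (c := 3 / 10)
      (by push_cast at h5ℓ ⊢; linarith) (by norm_num) (by norm_num) (by norm_num)
    omega
  have hm11 : m < 11 := lt_of_sq_mul_excess_le key (c := 1 / 6)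
    (by push_cast at h3ℓ ⊢; linarith) (by norm_num) (by norm_num) (by norm_num)
  omega
end

section
/- Let ω ∈ ℂ satisfy ω² + ω + 1 = 0 and define φ₁(x) = x(x−1)(27x² − (723+1392ω)x − 496+696ω)³ / (64((6ω+3)x − 8 − 3ω)⁷). Then the rational function φ₁ has degree 8, i.e., the numerator has degree 8 in x and the numerator and denominator share no common root. -/
/-!
The denominator vanishes only at the root of `ℓ = (6ω + 3)x - (8 + 3ω)`. The resultants of `ℓ`
with the factors `x`, `x - 1` and `q = 27x² - (723 + 1392ω)x - 496 + 696ω` of the numerator are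
`8 + 3ω`, `5 - 3ω` and `27 · 7⁴`. The first two are conjugate in `ℤ[ω]` with norm `49`, so none of
the three vanishes.
-/

open Polynomial

lemma natDegree_X_mul_X_sub_one_mul_quadratic_pow_three {K : Type*} [Field K] [CharZero K]
    (a b : K) : (X * (X - 1) * (C 27 * X ^ 2 - C a * X + C b) ^ 3).natDegree = 8 := by
  compute_degree!

lemma mul_eq_of_isRoot_C_mul_linear_pow {K : Type*} [Field K] {c a b z : K} {n : ℕ}
    (hc : c ≠ 0) (h : (C c * (C a * X - C b) ^ n).IsRoot z) : a * z = b := by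
  simp only [IsRoot, eval_mul, eval_pow, eval_sub, eval_C, eval_X, mul_eq_zero, hc,
    false_or] at h
  exact sub_eq_zero.mp (eq_zero_of_pow_eq_zero h)

section CubeRootOfUnity

variable {ω : ℂ}

lemma eight_add_three_mul_ne_zero (hω : ω ^ 2 + ω + 1 = 0) : 8 + 3 * ω ≠ 0 := by
  intro h
  have : (49 : ℂ) = 0 := by linear_combination (5 - 3 * ω) * h + 9 * hω
  norm_num at this

lemma five_sub_three_mul_ne_zero (hω : ω ^ 2 + ω + 1 = 0) : 5 - 3 * ω ≠ 0 := by
  intro h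
  have : (49 : ℂ) = 0 := by linear_combination (8 + 3 * ω) * h + 9 * hω
  norm_num at this

lemma six_mul_add_three_sq_mul_quadratic (hω : ω ^ 2 + ω + 1 = 0) {z : ℂ}
    (hz : (6 * ω + 3) * z = 8 + 3 * ω) :
    (6 * ω + 3) ^ 2 * (27 * z ^ 2 - (723 + 1392 * ω) * z + (-496 + 696 * ω)) = 27 * 7 ^ 4 := by
  linear_combination
    (27 * ((6 * ω + 3) * z + 8 + 3 * ω) - (723 + 1392 * ω) * (6 * ω + 3)) * hz - 84915 * hω

end CubeRootOfUnity

/-- The covering φ₁ for the degree-8 transformation (1/2,1/3,1/7) → (1/3,1/3,1/7):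
    its numerator has degree 8 and shares no root with its denominator. -/
theorem stmt_9 (ω : ℂ) (hω : ω ^ 2 + ω + 1 = 0)
    (P Q : Polynomial ℂ)
    (hP : P = X * (X - 1) *
      (C 27 * X ^ 2 - C (723 + 1392 * ω) * X + C (-496 + 696 * ω)) ^ 3)
    (hQ : Q = C 64 * (C (6 * ω + 3) * X - C (8 + 3 * ω)) ^ 7) :
    P.natDegree = 8 ∧ ∀ z : ℂ, ¬(P.IsRoot z ∧ Q.IsRoot z) := by
  subst hP hQ
  refine ⟨natDegree_X_mul_X_sub_one_mul_quadratic_pow_three _ _, ?_⟩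
  rintro z ⟨hPz, hQz⟩
  have hz := mul_eq_of_isRoot_C_mul_linear_pow (by norm_num) hQz
  simp only [IsRoot, eval_mul, eval_pow, eval_sub, eval_add, eval_C, eval_X, eval_one,
    mul_eq_zero, pow_eq_zero_iff, ne_eq, OfNat.ofNat_ne_zero, not_false_eq_true] at hPz
  rcases hPz with (rfl | hz1) | hq
  · exact eight_add_three_mul_ne_zero hω (by simpa using hz.symm)
  · rw [sub_eq_zero.mp hz1] at hz
    exact five_sub_three_mul_ne_zero hω (by linear_combination -hz)
  · have := six_mul_add_three_sq_mul_quadratic hω hz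
    rw [hq] at this
    norm_num at this
end

section
/- Define φ₃(x) = −x²(x−1)(49x−81)⁷ / (4(16807x³ − 9261x² − 13851x + 6561)³). Then the numerator and denominator of φ₃ are coprime polynomials over ℚ and both have degree-10 numerator and degree-9 denominator; in particular φ₃ defines a degree 10 morphism ℙ¹ → ℙ¹. -/
/-! The numerator splits over ℚ into the linear factors `X`, `X - 1` and `49X - 81`, so it is
coprime to the denominator as soon as the cubic `16807x³ - 9261x² - 13851x + 6561` does not
vanish at `0`, `1` and `81/49`; there it takes the values `3⁸`, `2⁸` and `6⁸/7²`. -/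

open Polynomial

section LinearFactor

variable {K : Type*} [Field K]

theorem isCoprime_X_sub_C_of_eval_ne_zero {a : K} {q : K[X]} (h : q.eval a ≠ 0) :
    IsCoprime (X - C a) q :=
  (irreducible_X_sub_C a).coprime_iff_not_dvd.mpr (mt dvd_iff_isRoot.mp h)

theorem isCoprime_X_of_eval_zero_ne_zero {q : K[X]} (h : q.eval 0 ≠ 0) : IsCoprime X q := by
  simpa using isCoprime_X_sub_C_of_eval_ne_zero h

theorem isCoprime_C_mul_X_sub_C_of_eval_ne_zero {b c : K} (hb : b ≠ 0) {q : K[X]}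
    (h : q.eval (c / b) ≠ 0) : IsCoprime (C b * X - C c) q := by
  have hfactor : C b * X - C c = C b * (X - C (c / b)) := by
    rw [mul_sub, ← C_mul, mul_div_cancel₀ c hb]
  rw [hfactor, isCoprime_mul_unit_left_left (isUnit_C.mpr hb.isUnit)]
  exact isCoprime_X_sub_C_of_eval_ne_zero h

end LinearFactor

/-- The covering φ₃ = -x²(x-1)(49x-81)⁷ / (4(16807x³-9261x²-13851x+6561)³) has
    coprime numerator (degree 10) and denominator (degree 9), hence defines a
    degree-10 morphism ℙ¹ → ℙ¹. -/
theorem stmt_11 (P Q : Polynomial ℚ)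
    (hP : P = -(X ^ 2 * (X - 1) * (C 49 * X - C 81) ^ 7))
    (hQ : Q = C 4 * (C 16807 * X ^ 3 - C 9261 * X ^ 2 - C 13851 * X + C 6561) ^ 3) :
    IsCoprime P Q ∧ P.natDegree = 10 ∧ Q.natDegree = 9 ∧
      max P.natDegree Q.natDegree = 10 := by
  have hPdeg : P.natDegree = 10 := by subst hP; rw [natDegree_neg]; compute_degree!
  have hQdeg : Q.natDegree = 9 := by subst hQ; compute_degree!
  have hX : IsCoprime X Q :=
    isCoprime_X_of_eval_zero_ne_zero (by subst hQ; norm_num)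
  have hX_sub_one : IsCoprime (X - C 1) Q :=
    isCoprime_X_sub_C_of_eval_ne_zero (by subst hQ; norm_num)
  have hlinear : IsCoprime (C 49 * X - C 81) Q :=
    isCoprime_C_mul_X_sub_C_of_eval_ne_zero (by norm_num) (by subst hQ; norm_num)
  refine ⟨?_, hPdeg, hQdeg, by rw [hPdeg, hQdeg]; rfl⟩
  rw [hP, ← C_1]
  exact ((hX.pow_left.mul_left hX_sub_one).mul_left hlinear.pow_left).neg_left
end

section
/- The cubic transformation identity ₂F₁(a, (1−a)/3; (4a+5)/6; x) = (1 − 4x)^{−a} · ₂F₁(a/3, (a+1)/3; (4a+5)/6; 27x/(4x−1)³) holds for all complex a with (4a+5)/6 not a nonpositive integer and all x in a sufficiently small neighborhood of 0. -/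
open Polynomial

/-- The Gauss hypergeometric series ₂F₁(A,B;C;x). -/
noncomputable def hyp (A B C x : ℂ) : ℂ :=
  ∑' n : ℕ, (ascPochhammer ℂ n).eval A * (ascPochhammer ℂ n).eval B /
    ((ascPochhammer ℂ n).eval C * (n.factorial : ℂ)) * x ^ n

/-!
Both sides solve the hypergeometric equation with parameters `(a, (1 - a) / 3; (4a + 5) / 6)`:
after the substitution `y = 27x / (4x - 1)³` and multiplication by `(1 - 4x)^(-a)`, the
hypergeometric operator with parameters `(a / 3, (a + 1) / 3; (4a + 5) / 6)` becomes
`-27 (1 - 4x)^(-a) / (4x - 1)²` times the one with parameters `(a, (1 - a) / 3; (4a + 5) / 6)`.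
The right-hand side is analytic at `0`, so its Taylor coefficients satisfy the three-term
recurrence that this equation imposes; as they start with `1`, they are the hypergeometric
coefficients of the left-hand side.
-/

open FormalMultilinearSeries Filter Topology Complex

section PowerSeries

variable {𝕜 E : Type*} [NontriviallyNormedField 𝕜] [NormedAddCommGroup E] [NormedSpace 𝕜 E]

noncomputable def FormalMultilinearSeries.scalarDerivSeries (p : FormalMultilinearSeries 𝕜 𝕜 E) :
    FormalMultilinearSeries 𝕜 𝕜 E :=
  (ContinuousLinearMap.apply 𝕜 E (1 : 𝕜)).compFormalMultilinearSeries p.derivSeries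

@[simp]
lemma FormalMultilinearSeries.coeff_scalarDerivSeries (p : FormalMultilinearSeries 𝕜 𝕜 E)
    (n : ℕ) : p.scalarDerivSeries.coeff n = ((n : 𝕜) + 1) • p.coeff (n + 1) := by
  rw [← Nat.cast_add_one, Nat.cast_smul_eq_nsmul, ← derivSeries_coeff_one]
  rfl

lemma HasFPowerSeriesAt.deriv_scalarDerivSeries [CompleteSpace E] {f : 𝕜 → E}
    {p : FormalMultilinearSeries 𝕜 𝕜 E} {x : 𝕜} (h : HasFPowerSeriesAt f p x) :
    HasFPowerSeriesAt (deriv f) p.scalarDerivSeries x :=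
  let ⟨_, hr⟩ := h
  ⟨_, (ContinuousLinearMap.apply 𝕜 E (1 : 𝕜)).comp_hasFPowerSeriesOnBall hr.fderiv⟩

lemma hasSum_pow_mul_natCast_mul {e : ℕ → 𝕜} {z s : 𝕜}
    (h : HasSum (fun n : ℕ => z ^ n * (((n : 𝕜) + 1) * e (n + 1))) s) :
    HasSum (fun n : ℕ => z ^ n * (n * e n)) (z * s) := by
  refine (hasSum_nat_add_iff' 1).1 ?_
  simpa [pow_succ, mul_assoc, mul_comm, mul_left_comm] using h.mul_left z

end PowerSeries

section Calculus

variable {𝕜 : Type*} [NontriviallyNormedField 𝕜] [CompleteSpace 𝕜]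

lemma eventually_deriv_mul_comp {u u₁ W W₁ H : 𝕜 → 𝕜} {x : 𝕜}
    (hu : ∀ᶠ y in 𝓝 x, HasDerivAt u (u₁ y) y) (hW : ∀ᶠ y in 𝓝 x, HasDerivAt W (W₁ y) y)
    (hH : AnalyticAt 𝕜 H (W x)) :
    deriv (fun y => u y * H (W y)) =ᶠ[𝓝 x]
      fun y => u₁ y * H (W y) + u y * (deriv H (W y) * W₁ y) := by
  have hHW := hW.self_of_nhds.continuousAt.eventually hH.eventually_analyticAt
  filter_upwards [hu, hW, hHW] with y hu hW hH
  exact (hu.mul (hH.differentiableAt.hasDerivAt.comp y hW)).deriv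

lemma deriv_deriv_mul_comp {u u₁ W W₁ H : 𝕜 → 𝕜} {u₂ W₂ x : 𝕜}
    (hu : ∀ᶠ y in 𝓝 x, HasDerivAt u (u₁ y) y) (hu₁ : HasDerivAt u₁ u₂ x)
    (hW : ∀ᶠ y in 𝓝 x, HasDerivAt W (W₁ y) y) (hW₁ : HasDerivAt W₁ W₂ x)
    (hH : AnalyticAt 𝕜 H (W x)) :
    deriv (deriv fun y => u y * H (W y)) x =
      u₂ * H (W x) + 2 * (u₁ x * (deriv H (W x) * W₁ x)) +
        u x * (deriv (deriv H) (W x) * W₁ x ^ 2 + deriv H (W x) * W₂) := by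
  have hWx := hW.self_of_nhds
  have hH₁ := hH.deriv.differentiableAt.hasDerivAt.comp x hWx
  have hH₀ := hH.differentiableAt.hasDerivAt.comp x hWx
  rw [(eventually_deriv_mul_comp hu hW hH).deriv_eq]
  refine ((hu₁.mul hH₀).add (hu.self_of_nhds.mul (hH₁.mul hW₁))).deriv.trans ?_
  simp only [Function.comp_apply, Pi.mul_apply]
  ring

end Calculus

section Hypergeometric

section Field

variable {𝕂 : Type*} [Field 𝕂] (A B C : 𝕂)

def hypergeometricResidual (c : ℕ → 𝕂) (n : ℕ) : 𝕂 :=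
  (n + 1) * (n + C) * c (n + 1) - (n + A) * (n + B) * c n

variable {A B C} [CharZero 𝕂]

lemma hypergeometricResidual_ordinaryHypergeometricCoefficient
    (hC : ∀ n : ℕ, (n : 𝕂) + C ≠ 0) :
    hypergeometricResidual A B C (ordinaryHypergeometricCoefficient A B C) = 0 := by
  funext n
  have hn : (n : 𝕂) + 1 ≠ 0 := by exact_mod_cast n.succ_ne_zero
  have hCn : C + n ≠ 0 := by rw [add_comm]; exact hC n
  simp only [hypergeometricResidual, ordinaryHypergeometricCoefficient, ascPochhammer_succ_eval,
    Nat.factorial_succ, Nat.cast_mul, Nat.cast_add_one, mul_inv, Pi.zero_apply]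
  field_simp
  ring

lemma eq_ordinaryHypergeometricCoefficient {c : ℕ → 𝕂} (hC : ∀ n : ℕ, (n : 𝕂) + C ≠ 0)
    (h₀ : c 0 = 1) (hc : hypergeometricResidual A B C c = 0) :
    c = ordinaryHypergeometricCoefficient A B C := by
  funext n
  induction n with
  | zero => simp [h₀, ordinaryHypergeometricCoefficient]
  | succ n ih =>
    have hn : ((n : 𝕂) + 1) * (n + C) ≠ 0 :=
      mul_ne_zero (by exact_mod_cast n.succ_ne_zero) (hC n)
    have h₁ := congrFun hc n
    have h₂ := congrFun (hypergeometricResidual_ordinaryHypergeometricCoefficient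
      (A := A) (B := B) hC) n
    simp only [hypergeometricResidual, Pi.zero_apply] at h₁ h₂
    apply mul_left_cancel₀ hn
    linear_combination h₁ - h₂ + (n + A) * (n + B) * ih

end Field

variable {𝕜 : Type*} [NontriviallyNormedField 𝕜] (A B C : 𝕜)

noncomputable def hypergeometricOp (f : 𝕜 → 𝕜) (x : 𝕜) : 𝕜 :=
  x * (1 - x) * deriv (deriv f) x + (C - (A + B + 1) * x) * deriv f x - A * B * f x

variable {A B C}

lemma HasFPowerSeriesAt.hypergeometricOp [CompleteSpace 𝕜] {f : 𝕜 → 𝕜}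
    {p : FormalMultilinearSeries 𝕜 𝕜 𝕜} (h : HasFPowerSeriesAt f p 0) :
    HasFPowerSeriesAt (hypergeometricOp A B C f)
      (ofScalars 𝕜 (hypergeometricResidual A B C p.coeff)) 0 := by
  have h₁ := h.deriv_scalarDerivSeries
  have h₂ := h₁.deriv_scalarDerivSeries
  have hc₂ : p.scalarDerivSeries.scalarDerivSeries.coeff =
      fun n : ℕ => ((n : 𝕜) + 1) * p.scalarDerivSeries.coeff (n + 1) :=
    funext fun n => coeff_scalarDerivSeries _ n
  refine hasFPowerSeriesAt_iff.2 ?_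
  filter_upwards [hasFPowerSeriesAt_iff.1 h, hasFPowerSeriesAt_iff.1 h₁,
    hasFPowerSeriesAt_iff.1 h₂] with z s₀ s₁ s₂
  simp only [zero_add, smul_eq_mul, coeff_ofScalars, hc₂] at s₀ s₁ s₂ ⊢
  have zs₂ := hasSum_pow_mul_natCast_mul s₂
  have zs₁ := hasSum_pow_mul_natCast_mul (e := p.coeff) <| by
    simpa only [coeff_scalarDerivSeries, smul_eq_mul] using s₁
  -- `z² f''` is summed as `z (z f'')`, whose coefficients are `n (n - 1) cₙ`
  have zzs₂ := hasSum_pow_mul_natCast_mul (e := fun n => ((n : 𝕜) - 1) * p.coeff n) <| by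
    simpa only [coeff_scalarDerivSeries, smul_eq_mul, Nat.cast_add_one, add_sub_cancel_right,
      mul_left_comm] using zs₂
  convert ((zs₂.sub zzs₂).add ((s₁.mul_left C).sub (zs₁.mul_left (A + B + 1)))).sub
    (s₀.mul_left (A * B)) using 1
  · funext n
    simp only [hypergeometricResidual, coeff_scalarDerivSeries, smul_eq_mul]
    ring
  · simp only [_root_.hypergeometricOp]
    ring

end Hypergeometric

section OrdinaryHypergeometric

variable {𝕂 : Type*} [RCLike 𝕂]

lemma ordinaryHypergeometricSeries_radius_pos (a b c : 𝕂) :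
    0 < (ordinaryHypergeometricSeries 𝕂 a b c).radius := by
  by_cases h : ∃ k : ℕ, (k : 𝕂) = -a ∨ (k : 𝕂) = -b ∨ (k : 𝕂) = -c
  · obtain ⟨k, h | h | h⟩ := h
    · simp [neg_eq_iff_eq_neg.1 h.symm, ordinaryHypergeometric_radius_top_of_neg_nat₁]
    · simp [neg_eq_iff_eq_neg.1 h.symm, ordinaryHypergeometric_radius_top_of_neg_nat₂]
    · simp [neg_eq_iff_eq_neg.1 h.symm, ordinaryHypergeometric_radius_top_of_neg_nat₃]
  · simp only [not_exists, not_or] at h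
    simp [ordinaryHypergeometricSeries_radius_eq_one 𝕂 a b c h]

lemma hasFPowerSeriesAt_ordinaryHypergeometric (a b c : 𝕂) :
    HasFPowerSeriesAt (₂F₁ a b c) (ordinaryHypergeometricSeries 𝕂 a b c) 0 :=
  ((ordinaryHypergeometricSeries 𝕂 a b c).hasFPowerSeriesOnBall
    (ordinaryHypergeometricSeries_radius_pos a b c)).hasFPowerSeriesAt

lemma eventually_hypergeometricOp_ordinaryHypergeometric (a b : 𝕂) {c : 𝕂}
    (hc : ∀ n : ℕ, (n : 𝕂) + c ≠ 0) :
    ∀ᶠ z in 𝓝 0, hypergeometricOp a b c (₂F₁ a b c) z = 0 := by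
  have h := (hasFPowerSeriesAt_ordinaryHypergeometric a b c).hypergeometricOp (A := a) (B := b)
    (C := c)
  have hcoeff : (ordinaryHypergeometricSeries 𝕂 a b c).coeff =
      ordinaryHypergeometricCoefficient a b c :=
    funext fun _ => coeff_ofScalars
  rw [hcoeff, hypergeometricResidual_ordinaryHypergeometricCoefficient hc,
    ofScalars_series_eq_zero_of_scalar_zero] at h
  exact h.eventually_eq_zero

end OrdinaryHypergeometric

noncomputable def cubicMap (x : ℂ) : ℂ := 27 * x / (4 * x - 1) ^ 3

lemma hasDerivAt_cubicMap {x : ℂ} (hx : 4 * x - 1 ≠ 0) :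
    HasDerivAt cubicMap (-27 * (8 * x + 1) / (4 * x - 1) ^ 4) x := by
  refine (((hasDerivAt_id' x).const_mul 27).div (((hasDerivAt_id' x).const_mul 4).sub_const 1
    |>.fun_pow 3) (pow_ne_zero 3 hx)).congr_deriv ?_
  field_simp
  ring

lemma hasDerivAt_deriv_cubicMap {x : ℂ} (hx : 4 * x - 1 ≠ 0) :
    HasDerivAt (fun y => -27 * (8 * y + 1) / (4 * y - 1) ^ 4)
      (648 * (4 * x + 1) / (4 * x - 1) ^ 5) x := by
  refine ((((hasDerivAt_id' x).const_mul 8).add_const 1 |>.const_mul (-27)).div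
    (((hasDerivAt_id' x).const_mul 4).sub_const 1 |>.fun_pow 4) (pow_ne_zero 4 hx)).congr_deriv ?_
  field_simp
  ring

lemma hasDerivAt_one_sub_four_mul_cpow (b : ℂ) {y : ℂ} (hy : 1 - 4 * y ∈ slitPlane) :
    HasDerivAt (fun y => (1 - 4 * y) ^ b) (-4 * b * (1 - 4 * y) ^ (b - 1)) y := by
  refine (((hasDerivAt_id' y).const_mul 4).const_sub 1 |>.cpow_const hy).congr_deriv ?_
  ring

lemma eventually_one_sub_four_mul_mem_slitPlane {x : ℂ} (hx : 1 - 4 * x ∈ slitPlane) :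
    ∀ᶠ y in 𝓝 x, 1 - 4 * y ∈ slitPlane :=
  (continuous_const.sub (continuous_const.mul continuous_id)).continuousAt.eventually_mem
    (isOpen_slitPlane.mem_nhds hx)

lemma hypergeometricOp_cpow_mul_comp_cubicMap {a : ℂ} {H : ℂ → ℂ} {x : ℂ}
    (hx : 1 - 4 * x ∈ slitPlane) (hH : AnalyticAt ℂ H (cubicMap x)) :
    hypergeometricOp a ((1 - a) / 3) ((4 * a + 5) / 6)
        (fun y => (1 - 4 * y) ^ (-a) * H (cubicMap y)) x =
      -27 * (1 - 4 * x) ^ (-a) / (4 * x - 1) ^ 2 *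
        hypergeometricOp (a / 3) ((a + 1) / 3) ((4 * a + 5) / 6) H (cubicMap x) := by
  have hx₀ : 1 - 4 * x ≠ 0 := slitPlane_ne_zero hx
  have hx₁ : 4 * x - 1 ≠ 0 := fun h => hx₀ (by linear_combination -h)
  have hu : ∀ᶠ y in 𝓝 x,
      HasDerivAt (fun y => (1 - 4 * y) ^ (-a)) (4 * a * (1 - 4 * y) ^ (-a - 1)) y :=
    (eventually_one_sub_four_mul_mem_slitPlane hx).mono fun y hy =>
      (hasDerivAt_one_sub_four_mul_cpow (-a) hy).congr_deriv (by ring)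
  have hu₁ : HasDerivAt (fun y => 4 * a * (1 - 4 * y) ^ (-a - 1))
      (16 * a * (a + 1) * (1 - 4 * x) ^ (-a - 2)) x :=
    ((hasDerivAt_one_sub_four_mul_cpow (-a - 1) hx).const_mul (4 * a)).congr_deriv (by ring_nf)
  have hW : ∀ᶠ y in 𝓝 x, HasDerivAt cubicMap (-27 * (8 * y + 1) / (4 * y - 1) ^ 4) y :=
    (continuous_id.const_mul 4 |>.sub continuous_const).continuousAt.eventually_ne hx₁ |>.mono
      fun y hy => hasDerivAt_cubicMap hy
  simp only [hypergeometricOp]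
  rw [deriv_deriv_mul_comp hu hu₁ hW (hasDerivAt_deriv_cubicMap hx₁) hH,
    (eventually_deriv_mul_comp hu hW hH).eq_of_nhds, cpow_sub _ _ hx₀, cpow_sub _ _ hx₀,
    cpow_one, cpow_ofNat]
  generalize H (cubicMap x) = h₀, deriv H (cubicMap x) = h₁, deriv (deriv H) (cubicMap x) = h₂,
    (1 - 4 * x) ^ (-a) = u
  rw [cubicMap, show 1 - 4 * x = -(4 * x - 1) by ring]
  -- `field_simp` normalises `4 * x - 1` to `x * 4 - 1`
  have hx₂ : x * 4 - 1 ≠ 0 := by rwa [mul_comm]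
  field_simp
  ring

lemma hyp_eq_ordinaryHypergeometric (A B C : ℂ) : hyp A B C = ₂F₁ A B C := by
  funext x
  rw [hyp, ordinaryHypergeometric_eq_tsum]
  congr 1
  funext n
  rw [smul_eq_mul, div_eq_mul_inv, mul_inv]
  ring

theorem eventually_ordinaryHypergeometric_cubic {a : ℂ}
    (hC : ∀ n : ℕ, (n : ℂ) + (4 * a + 5) / 6 ≠ 0) :
    ∀ᶠ x in 𝓝 0, ₂F₁ a ((1 - a) / 3) ((4 * a + 5) / 6) x =
      (1 - 4 * x) ^ (-a) * ₂F₁ (a / 3) ((a + 1) / 3) ((4 * a + 5) / 6) (cubicMap x) := by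
  set F : ℂ → ℂ := ₂F₁ (a / 3) ((a + 1) / 3) ((4 * a + 5) / 6)
  have hF := hasFPowerSeriesAt_ordinaryHypergeometric (a / 3) ((a + 1) / 3) ((4 * a + 5) / 6)
  have hW₀ : cubicMap 0 = 0 := by simp [cubicMap]
  have hW : AnalyticAt ℂ cubicMap 0 := by unfold cubicMap; fun_prop (disch := norm_num)
  have hslit := eventually_one_sub_four_mul_mem_slitPlane (x := 0) (by simp)
  have hFW : ∀ᶠ x in 𝓝 (0 : ℂ), AnalyticAt ℂ F (cubicMap x) ∧
      hypergeometricOp (a / 3) ((a + 1) / 3) ((4 * a + 5) / 6) F (cubicMap x) = 0 :=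
    hW.continuousAt.eventually <| by
      rw [hW₀]
      exact hF.analyticAt.eventually_analyticAt.and
        (eventually_hypergeometricOp_ordinaryHypergeometric (a / 3) ((a + 1) / 3) hC)
  have hG : ∀ᶠ x in 𝓝 (0 : ℂ), hypergeometricOp a ((1 - a) / 3) ((4 * a + 5) / 6)
      (fun y => (1 - 4 * y) ^ (-a) * F (cubicMap y)) x = 0 := by
    filter_upwards [hslit, hFW] with x hx ⟨hH, hL⟩
    rw [hypergeometricOp_cpow_mul_comp_cubicMap hx hH, hL, mul_zero]
  obtain ⟨q, hq⟩ : AnalyticAt ℂ (fun y => (1 - 4 * y) ^ (-a) * F (cubicMap y)) 0 := by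
    refine AnalyticAt.mul ?_ (hF.analyticAt.comp_of_eq hW hW₀)
    exact (by fun_prop : AnalyticAt ℂ (fun y : ℂ => 1 - 4 * y) 0).cpow analyticAt_const (by simp)
  have hres := (ofScalars_series_eq_zero ℂ).1 (hq.hypergeometricOp.eq_zero_of_eventually hG)
  have hq₀ : q.coeff 0 = 1 := by
    rw [FormalMultilinearSeries.coeff, hq.coeff_zero]
    simp [hW₀, F]
  have hcoeff := eq_ordinaryHypergeometricCoefficient hC hq₀ hres
  filter_upwards [hasFPowerSeriesAt_iff.1 hq] with x hx
  rw [hcoeff] at hx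
  simpa [ordinaryHypergeometric_eq_tsum, mul_comm] using hx.tsum_eq

/-- The cubic transformation:
    ₂F₁(a,(1-a)/3;(4a+5)/6;x) = (1-4x)^{-a} ₂F₁(a/3,(a+1)/3;(4a+5)/6;27x/(4x-1)³)
    for |x| sufficiently small. -/
theorem stmt_18 (a : ℂ) (hC : ∀ n : ℕ, (4 * a + 5) / 6 ≠ -(n : ℂ)) :
    ∃ ε > (0 : ℝ), ∀ x : ℂ, ‖x‖ < ε →
      hyp a ((1 - a) / 3) ((4 * a + 5) / 6) x =
        (1 - 4 * x) ^ (-a) *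
          hyp (a / 3) ((a + 1) / 3) ((4 * a + 5) / 6) (27 * x / (4 * x - 1) ^ 3) := by
  have hC' : ∀ n : ℕ, (n : ℂ) + (4 * a + 5) / 6 ≠ 0 :=
    fun n h => hC n (by linear_combination h)
  obtain ⟨ε, hε, h⟩ := Metric.eventually_nhds_iff.1 (eventually_ordinaryHypergeometric_cubic hC')
  refine ⟨ε, hε, fun x hx => ?_⟩
  simp only [hyp_eq_ordinaryHypergeometric]
  exact h (by simpa using hx)
end
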